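/- Let G be a finite {C4, C5}-free simple graph, let t be an integer with 2 ≤ t ≤ 6, and let v be a vertex of degree 2t. Suppose there are 2(t−1) distinct vertices u₁, u₂, …, u_{2t−2}, all of degree 3 in G and all distinct from v, such that v u_{2i−1} u_{2i} is a triangle in G for each i ∈ {1, …, t−1}. Then the subgraph of G induced by {v, u₁, …, u_{2t−2}} is (P3+P4, 4)-reducible in G; in particular, G contains a (P3+P4, 4)-reducible induced subgraph with at most 29 vertices. -/

import Mathlib

open Finset

/-- The restriction of a graph `G` to a vertex set `A`, viewed as a graph on the same
vertex type: the edges of `G` with both endpoints in `A`. -/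
def gOn {V : Type*} (G : SimpleGraph V) (A : Set V) : SimpleGraph V where
  Adj u v := u ∈ A ∧ v ∈ A ∧ G.Adj u v
  symm := ⟨fun u v ⟨ha, hb, h⟩ => ⟨hb, ha, h.symm⟩⟩
  loopless := ⟨fun v h => G.irrefl h.2.2⟩

/-- The degree of a vertex `v` in `G`. -/
noncomputable def ndeg {V : Type*} (G : SimpleGraph V) (v : V) : ℕ :=
  {w | G.Adj v w}.ncard

/-- The degree of a vertex `v` in the subgraph of `G` induced on `A`. -/
noncomputable def degOn {V : Type*} (G : SimpleGraph V) (A : Set V) (v : V) : ℕ :=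
  {w ∈ A | G.Adj v w}.ncard

/-- The subgraph of `G` induced on `A` has a proper coloring from the lists `L`. -/
def ColorableOn {V α : Type*} (G : SimpleGraph V) (A : Set V) (L : V → Finset α) : Prop :=
  ∃ φ : V → α, (∀ v ∈ A, φ v ∈ L v) ∧ ∀ u ∈ A, ∀ w ∈ A, G.Adj u w → φ u ≠ φ w

/-- `φ` is a proper coloring of `G` with `φ v ∈ L v` for every vertex `v`. -/
def IsLColoring {V α : Type*} (G : SimpleGraph V) (L : V → Finset α) (φ : V → α) : Prop :=
  (∀ v, φ v ∈ L v) ∧ ∀ ⦃u w⦄, G.Adj u w → φ u ≠ φ w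

/-- `S` is `(P3+P4)`-independent in `H`: there is no path on 3 vertices (length 2) and
no path on 4 vertices (length 3) in `H` whose two endpoints both belong to `S`. -/
def P34Indep {V : Type*} (H : SimpleGraph V) (S : Set V) : Prop :=
  ∀ u ∈ S, ∀ v ∈ S, ∀ p : H.Walk u v, p.IsPath → p.length ≠ 2 ∧ p.length ≠ 3

/-- `G` contains no cycle of length 4 and no cycle of length 5. -/
def C45Free {V : Type*} (G : SimpleGraph V) : Prop :=
  ∀ (v : V) (c : G.Walk v v), c.IsCycle → c.length ≠ 4 ∧ c.length ≠ 5

/-- Condition (FIX) for the subgraph of `G` induced on `A`, with parameter `k`. -/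
def FIX {V : Type*} (G : SimpleGraph V) (A : Set V) (k : ℕ) : Prop :=
  ∀ v ∈ A, ∀ L : V → Finset ℕ,
    1 ≤ (L v).card →
    (∀ w ∈ A, w ≠ v → (degOn G A w : ℤ) + k - ndeg G w ≤ (L w).card) →
    ColorableOn G A L

/-- Condition (FORB) for the subgraph of `G` induced on `A`, with parameter `k`. -/
def FORB {V : Type*} (G : SimpleGraph V) (A : Set V) (k : ℕ) : Prop :=
  ∀ S : Set V, S ⊆ A → P34Indep (gOn G A) S → S.ncard ≤ k - 2 →
    ∀ L : V → Finset ℕ,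
      (∀ w ∈ A,
        (degOn G A w : ℤ) + k - ndeg G w - S.indicator (fun _ => (1 : ℤ)) w ≤ (L w).card) →
      ColorableOn G A L

/-- The subgraph of `G` induced on `A` is `(P3+P4, k)`-reducible in `G`. -/
def Reducible {V : Type*} (G : SimpleGraph V) (A : Set V) (k : ℕ) : Prop :=
  FIX G A k ∧ FORB G A k

/-- `G` with the list assignment `L` is weighted `ε`-flexible. -/
def WeightedFlexible {V α : Type*} [Fintype V] (G : SimpleGraph V)
    (L : V → Finset α) (ε : ℝ) : Prop :=
  ∀ w : V → α → ℝ, (∀ v, ∀ c ∈ L v, 0 ≤ w v c) →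
    ∃ φ : V → α, IsLColoring G L φ ∧
      ε * (∑ v, ∑ c ∈ L v, w v c) ≤ ∑ v, w v (φ v)

/-!
Every two vertices of the windmill `{v} ∪ range p ∪ range q` have a common neighbour in it
(through the hub `v`, or through a blade partner), so a `(P3+P4)`-independent subset has at most
one vertex `d`; in (FIX), `d` is the vertex with one colour. Colouring `d` first, then `v`, then
the degree-3 blade vertices greedily, each vertex sees fewer coloured neighbours than it has
colours: a blade vertex `w ∉ S` keeps `deg_A w + 1` colours, and `v` keeps at least two because
only two of its `2t` neighbours lie outside the windmill.
-/

section ListColoring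

variable {V α : Type*} {G : SimpleGraph V} {L : V → Finset α}

lemma colorableOn_singleton {d : V} {c : α} (hc : c ∈ L d) : ColorableOn G {d} L :=
  ⟨fun _ => c, fun w hw => by rwa [Set.mem_singleton_iff.1 hw],
    fun u hu w hw huw => by
      rw [Set.mem_singleton_iff.1 hu, Set.mem_singleton_iff.1 hw] at huw
      exact absurd huw (G.loopless.irrefl d)⟩

lemma ColorableOn.insert {A : Set V} {a : V} (hA : A.Finite) (h : ColorableOn G A L)
    (ha : {w ∈ A | G.Adj a w}.ncard < (L a).card) : ColorableOn G (insert a A) L := by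
  classical
  obtain ⟨φ, hφL, hφ⟩ := h
  set N := {w ∈ A | G.Adj a w}
  have hN : N.Finite := hA.subset fun w hw => hw.1
  obtain ⟨c, hcL, hcN⟩ : ∃ c ∈ L a, c ∉ φ '' N := by
    by_contra! hsub
    have : (L a : Set α).ncard ≤ (φ '' N).ncard := Set.ncard_le_ncard hsub (hN.image φ)
    rw [Set.ncard_coe_finset] at this
    exact (this.trans (Set.ncard_image_le hN)).not_gt ha
  have hfresh : ∀ w ∈ A, G.Adj a w → c ≠ φ w := fun w hw haw hcw =>
    hcN ⟨w, ⟨hw, haw⟩, hcw.symm⟩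
  refine ⟨Function.update φ a c, ?_, ?_⟩
  · rintro w (rfl | hw)
    · simpa using hcL
    · by_cases hwa : w = a
      · subst hwa; simpa using hcL
      · simpa [hwa] using hφL w hw
  · rintro u (rfl | hu) w (rfl | hw) huw
    · exact absurd huw (G.loopless.irrefl _)
    · simpa [(G.ne_of_adj huw).symm] using hfresh w hw huw
    · simpa [G.ne_of_adj huw] using (hfresh u hu huw.symm).symm
    · by_cases hua : u = a
      · subst hua; simpa [(G.ne_of_adj huw).symm] using hfresh w hw huw
      by_cases hwa : w = a
      · subst hwa; simpa [hua] using (hfresh u hu huw.symm).symm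
      simpa [hua, hwa] using hφ u hu w hw huw

lemma ColorableOn.of_subset_of_degOn_lt {A X : Set V} (hX : X.Finite) (hAX : A ⊆ X)
    (hA : ColorableOn G A L) (h : ∀ w ∈ X \ A, degOn G X w < (L w).card) :
    ColorableOn G X L := by
  have key : ColorableOn G (A ∪ (X \ A)) L := by
    refine Set.Finite.induction_on_subset (motive := fun B _ => ColorableOn G (A ∪ B) L)
      (X \ A) (hX.sdiff) (by simpa using hA) ?_
    intro b B hb hBX _ hB
    rw [Set.union_insert]
    refine hB.insert ((hX.subset hAX).union (hX.sdiff.subset hBX)) ?_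
    refine lt_of_le_of_lt (Set.ncard_le_ncard ?_ (hX.subset fun w hw => hw.1)) (h b hb)
    rintro w ⟨hw, hbw⟩
    exact ⟨hw.elim (fun hwA => hAX hwA) (fun hwB => (hBX hwB).1), hbw⟩
  rwa [Set.union_sdiff_cancel hAX] at key

lemma colorableOn_of_degOn_lt_card {A : Set V} {d v : V} (hA : A.Finite) (hd : d ∈ A)
    (hv : v ∈ A) (hLd : 1 ≤ (L d).card) (hLv : d ≠ v → 2 ≤ (L v).card)
    (hL : ∀ w ∈ A, w ≠ v → w ≠ d → degOn G A w < (L w).card) : ColorableOn G A L := by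
  obtain ⟨c, hc⟩ := Finset.card_pos.1 hLd
  have hdv : ColorableOn G {v, d} L := by
    by_cases hvd : d = v
    · simpa [hvd] using colorableOn_singleton (G := G) (hvd ▸ hc)
    refine (colorableOn_singleton hc).insert (Set.finite_singleton d) ?_
    calc {w ∈ ({d} : Set V) | G.Adj v w}.ncard ≤ ({d} : Set V).ncard :=
          Set.ncard_le_ncard (fun w hw => hw.1)
      _ < (L v).card := by rw [Set.ncard_singleton]; exact hLv hvd
  refine hdv.of_subset_of_degOn_lt hA (Set.insert_subset hv (Set.singleton_subset_iff.2 hd)) ?_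
  rintro w ⟨hw, hwvd⟩
  simp only [Set.mem_insert_iff, Set.mem_singleton_iff, not_or] at hwvd
  exact hL w hw hwvd.1 hwvd.2

end ListColoring

lemma P34Indep.subsingleton {V : Type*} {H : SimpleGraph V} {S : Set V} (hS : P34Indep H S)
    (h : ∀ a ∈ S, ∀ b ∈ S, a ≠ b → ∃ m, H.Adj a m ∧ H.Adj m b) : S.Subsingleton := by
  intro a ha b hb
  by_contra hab
  obtain ⟨m, ham, hmb⟩ := h a ha b hb hab
  have hpath : (SimpleGraph.Walk.cons ham (.cons hmb .nil)).IsPath := by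
    simp [SimpleGraph.Walk.cons_isPath_iff, hab, H.ne_of_adj ham, H.ne_of_adj hmb]
  exact (hS a ha b hb _ hpath).1 rfl

section Reducible

variable {V : Type*} {G : SimpleGraph V} {A : Set V} {v : V}

lemma fix_four (hA : A.Finite) (hv : v ∈ A) (hdv : ndeg G v ≤ degOn G A v + 2)
    (hdeg : ∀ w ∈ A, w ≠ v → ndeg G w ≤ 3) : FIX G A 4 := by
  intro d hd L hLd hL
  refine colorableOn_of_degOn_lt_card hA hd hv hLd (fun hdv' => ?_) fun w hw hwv hwd => ?_
  · have := hL v hv hdv'.symm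
    omega
  · have := hL w hw hwd
    have := hdeg w hw hwv
    omega

lemma forb_four (hA : A.Finite) (hv : v ∈ A) (hdv : ndeg G v ≤ degOn G A v + 2)
    (hdeg : ∀ w ∈ A, w ≠ v → ndeg G w ≤ 3)
    (hcommon : ∀ a ∈ A, ∀ b ∈ A, a ≠ b → ∃ m, (gOn G A).Adj a m ∧ (gOn G A).Adj m b) :
    FORB G A 4 := by
  intro S hSA hS _ L hL
  obtain ⟨d, hd, hSd⟩ : ∃ d ∈ A, S ⊆ {d} := by
    rcases (hS.subsingleton fun a ha b hb => hcommon a (hSA ha) b (hSA hb)).eq_empty_or_singleton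
      with hS0 | ⟨d, rfl⟩
    · exact ⟨v, hv, hS0 ▸ Set.empty_subset _⟩
    · exact ⟨d, hSA rfl, subset_rfl⟩
  have hind_le : ∀ w, S.indicator (fun _ => (1 : ℤ)) w ≤ 1 := fun w =>
    Set.indicator_le_self' (fun _ _ => zero_le_one) w
  have hind_zero : ∀ w, w ≠ d → S.indicator (fun _ => (1 : ℤ)) w = 0 := fun w hwd =>
    Set.indicator_of_notMem (fun hw => hwd (hSd hw)) _
  refine colorableOn_of_degOn_lt_card hA hd hv ?_ (fun hdv' => ?_) fun w hw hwv hwd => ?_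
  · have hLd := hL d hd
    have := hind_le d
    by_cases hdv' : d = v
    · subst hdv'
      omega
    · obtain ⟨m, ⟨-, hmA, hdm⟩, -⟩ := hcommon d hd v hv hdv'
      have : 0 < degOn G A d := (Set.ncard_pos (hA.subset fun w hw => hw.1)).2 ⟨m, hmA, hdm⟩
      have := hdeg d hd hdv'
      omega
  · have := hL v hv
    rw [hind_zero v (Ne.symm hdv')] at this
    omega
  · have := hL w hw
    rw [hind_zero w hwd] at this
    have := hdeg w hw hwv
    omega

lemma reducible_four_of_exists_common_neighbor (hA : A.Finite) (hv : v ∈ A)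
    (hdv : ndeg G v ≤ degOn G A v + 2) (hdeg : ∀ w ∈ A, w ≠ v → ndeg G w ≤ 3)
    (hcommon : ∀ a ∈ A, ∀ b ∈ A, a ≠ b → ∃ m, (gOn G A).Adj a m ∧ (gOn G A).Adj m b) :
    Reducible G A 4 :=
  ⟨fix_four hA hv hdv hdeg, forb_four hA hv hdv hdeg hcommon⟩

end Reducible

lemma exists_common_neighbor_of_hub {V : Type*} {H : SimpleGraph V} {A : Set V} {v : V}
    (hhub : ∀ w ∈ A, w ≠ v → H.Adj v w ∧ ∃ m, H.Adj w m ∧ H.Adj m v) :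
    ∀ a ∈ A, ∀ b ∈ A, a ≠ b → ∃ m, H.Adj a m ∧ H.Adj m b := by
  intro a ha b hb hab
  by_cases hav : a = v
  · subst hav
    obtain ⟨-, m, hbm, hmv⟩ := hhub b hb (Ne.symm hab)
    exact ⟨m, hmv.symm, hbm.symm⟩
  by_cases hbv : b = v
  · subst hbv
    obtain ⟨-, m, ham, hmv⟩ := hhub a ha hav
    exact ⟨m, ham, hmv⟩
  exact ⟨v, (hhub a ha hav).1.symm, (hhub b hb hbv).1⟩

section Windmill

variable {V ι : Type*} {G : SimpleGraph V} {v : V} {p q : ι → V}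

lemma windmill_hub (htri : ∀ i, G.Adj v (p i) ∧ G.Adj (p i) (q i) ∧ G.Adj (q i) v) :
    ∀ w ∈ {v} ∪ Set.range p ∪ Set.range q, w ≠ v →
      (gOn G ({v} ∪ Set.range p ∪ Set.range q)).Adj v w ∧
        ∃ m, (gOn G ({v} ∪ Set.range p ∪ Set.range q)).Adj w m ∧
          (gOn G ({v} ∪ Set.range p ∪ Set.range q)).Adj m v := by
  have hvA : v ∈ {v} ∪ Set.range p ∪ Set.range q := by simp
  have hpA : ∀ i, p i ∈ {v} ∪ Set.range p ∪ Set.range q := by simp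
  have hqA : ∀ i, q i ∈ {v} ∪ Set.range p ∪ Set.range q := by simp
  rintro w ((hw | ⟨i, rfl⟩) | ⟨i, rfl⟩) hwv
  · exact absurd hw hwv
  · exact ⟨⟨hvA, hpA i, (htri i).1⟩, q i, ⟨hpA i, hqA i, (htri i).2.1⟩, hqA i, hvA, (htri i).2.2⟩
  · exact ⟨⟨hvA, hqA i, (htri i).2.2.symm⟩, p i, ⟨hqA i, hpA i, (htri i).2.1.symm⟩,
      hpA i, hvA, (htri i).1.symm⟩

lemma two_mul_card_le_degOn_windmill [Fintype ι]
    (hinj : Function.Injective (Sum.elim p q : ι ⊕ ι → V))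
    (htri : ∀ i, G.Adj v (p i) ∧ G.Adj (p i) (q i) ∧ G.Adj (q i) v) :
    2 * Fintype.card ι ≤ degOn G ({v} ∪ Set.range p ∪ Set.range q) v := by
  have hsub : Set.range (Sum.elim p q) ⊆ {w ∈ {v} ∪ Set.range p ∪ Set.range q | G.Adj v w} := by
    rintro _ ⟨i | i, rfl⟩
    · exact ⟨by simp, (htri i).1⟩
    · exact ⟨by simp, (htri i).2.2.symm⟩
  calc 2 * Fintype.card ι = (Set.range (Sum.elim p q)).ncard := by
        rw [Set.ncard_range_of_injective hinj, Nat.card_eq_fintype_card, Fintype.card_sum]; ring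
    _ ≤ _ := Set.ncard_le_ncard hsub (Set.toFinite _)

lemma ncard_windmill_le [Fintype ι] :
    ({v} ∪ Set.range p ∪ Set.range q).ncard ≤ 2 * Fintype.card ι + 1 := by
  rw [Set.union_assoc, ← Set.Sum.elim_range, Set.singleton_union]
  calc (insert v (Set.range (Sum.elim p q))).ncard ≤ (Set.range (Sum.elim p q)).ncard + 1 :=
        Set.ncard_insert_le _ _
    _ ≤ Nat.card (ι ⊕ ι) + 1 := by
        gcongr
        rw [← Set.image_univ]
        exact (Set.ncard_image_le (Set.toFinite _)).trans (Set.ncard_univ _).le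
    _ = 2 * Fintype.card ι + 1 := by
        rw [Nat.card_eq_fintype_card, Fintype.card_sum]; ring

end Windmill

theorem reducible_worst_faces_general {V : Type} (G : SimpleGraph V)
    (t : ℕ) (ht6 : t ≤ 6)
    (v : V) (hdv : ndeg G v = 2 * t)
    (p q : Fin (t - 1) → V)
    (hinj : Function.Injective (Sum.elim p q : Fin (t - 1) ⊕ Fin (t - 1) → V))
    (hdp : ∀ i, ndeg G (p i) = 3) (hdq : ∀ i, ndeg G (q i) = 3)
    (htri : ∀ i, G.Adj v (p i) ∧ G.Adj (p i) (q i) ∧ G.Adj (q i) v) :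
    Reducible G ({v} ∪ Set.range p ∪ Set.range q) 4 ∧
      ∃ A : Set V, A.Nonempty ∧ A.ncard ≤ 29 ∧ Reducible G A 4 := by
  have hred : Reducible G ({v} ∪ Set.range p ∪ Set.range q) 4 := by
    refine reducible_four_of_exists_common_neighbor (v := v) (Set.toFinite _) (by simp) ?_ ?_
      (exists_common_neighbor_of_hub (windmill_hub htri))
    · have := two_mul_card_le_degOn_windmill hinj htri
      rw [Fintype.card_fin] at this
      omega
    · rintro w ((hw | ⟨i, rfl⟩) | ⟨i, rfl⟩) hwv
      · exact absurd hw hwv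
      · exact (hdp i).le
      · exact (hdq i).le
  have hcard := ncard_windmill_le (v := v) (p := p) (q := q)
  rw [Fintype.card_fin] at hcard
  exact ⟨hred, _, ⟨v, by simp⟩, by omega, hred⟩

/-- (Lemma 4(3).) In a `{C4, C5}`-free graph, if a vertex `v` of degree `2t`
(`2 ≤ t ≤ 6`) lies on `t-1` triangles `v (p i) (q i)` whose other `2(t-1)` vertices are
pairwise distinct, distinct from `v`, and all of degree 3, then the induced subgraph on
`{v} ∪ range p ∪ range q` is `(P3+P4, 4)`-reducible in `G`; in particular `G` contains a
`(P3+P4, 4)`-reducible induced subgraph on at most 29 vertices. -/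
theorem reducible_worst_faces {V : Type} [Fintype V] (G : SimpleGraph V) (hfree : C45Free G)
    (t : ℕ) (ht2 : 2 ≤ t) (ht6 : t ≤ 6)
    (v : V) (hdv : ndeg G v = 2 * t)
    (p q : Fin (t - 1) → V)
    (hinj : Function.Injective (Sum.elim p q : Fin (t - 1) ⊕ Fin (t - 1) → V))
    (hpv : ∀ i, p i ≠ v) (hqv : ∀ i, q i ≠ v)
    (hdp : ∀ i, ndeg G (p i) = 3) (hdq : ∀ i, ndeg G (q i) = 3)
    (htri : ∀ i, G.Adj v (p i) ∧ G.Adj (p i) (q i) ∧ G.Adj (q i) v) :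
    Reducible G ({v} ∪ Set.range p ∪ Set.range q) 4 ∧
      ∃ A : Set V, A.Nonempty ∧ A.ncard ≤ 29 ∧ Reducible G A 4 :=
  reducible_worst_faces_general G t ht6 v hdv p q hinj hdp hdq htri
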